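/- arXiv:2312.12152 — 2 statements merged into one kernel-verified Lean document; each statement's English description precedes it below -/
import Mathlib

section
/- Let x, y, θ, p_x, p_y, p_θ : ℝ → ℝ be differentiable functions satisfying x' = p_x, y' = p_y, θ' = p_θ, p_x' = −x, p_y' = −y, p_θ' = 0. Then at every time t: (i) if p_x(t) ≠ 0, the function s ↦ arctan(x(s)/p_x(s)) has derivative 1 at t; (ii) if p_y(t) ≠ 0, the function s ↦ arctan(y(s)/p_y(s)) has derivative 1 at t; (iii) if p_θ(t) ≠ 0, the function s ↦ θ(s)/p_θ(s) has derivative 1 at t. -/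
/-! For a harmonic oscillator `u' = v`, `v' = -u`, the quotient rule gives
`(u / v)' = (u² + v²) / v² = 1 + (u / v)²`, which is exactly cancelled by
`arctan' z = 1 / (1 + z²)`. For the free rotation `θ' = p`, `p' = 0`, the quotient
`θ / p` already grows at rate `p / p = 1`. -/

open Real

theorem hasDerivAt_arctan_div_of_harmonic {u v : ℝ → ℝ} {t : ℝ}
    (hu : HasDerivAt u (v t) t) (hv : HasDerivAt v (-u t) t) (hvt : v t ≠ 0) :
    HasDerivAt (fun s => arctan (u s / v s)) 1 t := by
  have hquot := (hasDerivAt_arctan (u t / v t)).comp t (hu.div hv hvt)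
  refine hquot.congr_deriv ?_
  field_simp
  ring

theorem hasDerivAt_div_of_uniform_motion {q p : ℝ → ℝ} {t : ℝ}
    (hq : HasDerivAt q (p t) t) (hp : HasDerivAt p 0 t) (hpt : p t ≠ 0) :
    HasDerivAt (fun s => q s / p s) 1 t := by
  refine (hq.div hp hpt).congr_deriv ?_
  field_simp
  ring

/-- Along solutions of Hamilton's equations for the rolling disk, each
angle coordinate `φ¹ = arctan(x/pₓ)`, `φ² = arctan(y/p_y)`, `φ³ = θ/p_θ` evolves
with unit velocity wherever it is defined. -/
theorem disk_angle_coordinates_unit_velocity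
    (x y θ px py pθ : ℝ → ℝ)
    (hx : Differentiable ℝ x) (hy : Differentiable ℝ y) (hθ : Differentiable ℝ θ)
    (hpx : Differentiable ℝ px) (hpy : Differentiable ℝ py) (hpθ : Differentiable ℝ pθ)
    (hx' : ∀ t, deriv x t = px t) (hy' : ∀ t, deriv y t = py t)
    (hθ' : ∀ t, deriv θ t = pθ t)
    (hpx' : ∀ t, deriv px t = -x t) (hpy' : ∀ t, deriv py t = -y t)
    (hpθ' : ∀ t, deriv pθ t = 0) :
    ∀ t : ℝ,
      (px t ≠ 0 → HasDerivAt (fun s => Real.arctan (x s / px s)) 1 t) ∧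
      (py t ≠ 0 → HasDerivAt (fun s => Real.arctan (y s / py s)) 1 t) ∧
      (pθ t ≠ 0 → HasDerivAt (fun s => θ s / pθ s) 1 t) := by
  intro t
  refine ⟨hasDerivAt_arctan_div_of_harmonic ?_ ?_, hasDerivAt_arctan_div_of_harmonic ?_ ?_,
    hasDerivAt_div_of_uniform_motion ?_ ?_⟩
  · exact hx' t ▸ (hx t).hasDerivAt
  · exact hpx' t ▸ (hpx t).hasDerivAt
  · exact hy' t ▸ (hy t).hasDerivAt
  · exact hpy' t ▸ (hpy t).hasDerivAt
  · exact hθ' t ▸ (hθ t).hasDerivAt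
  · exact hpθ' t ▸ (hpθ t).hasDerivAt
end

section
/- Let e, a ∈ ℝ and consider a point (x, y, θ, p_x, p_y, p_θ) ∈ ℝ⁶ of the impact surface, i.e. satisfying y = a and p_θ = p_x. Let the post-impact momenta be p_x⁺ = (p_x + p_θ)/2, p_y⁺ = −e·p_y, p_θ⁺ = (p_x + p_θ)/2, with positions unchanged. Then: (i) ((p_x⁺)² + x²)/2 = (p_x² + x²)/2; (ii) (p_θ⁺)²/2 = p_θ²/2; (iii) ((p_y⁺)² + y²)/2 = e²·(p_y² + y²)/2 + (1 − e²)·a²/2. In particular, f₁ and f₃ are preserved by the impact map, and the value of f₂ after the impact depends only on its value before the impact (and on a); for e = 1, f₂ is also preserved. -/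
/-- On the impact surface of the rolling disk (`y = a`, `p_θ = pₓ`),
with post-impact momenta `pₓ⁺ = (pₓ + p_θ)/2`, `p_y⁺ = −e p_y`,
`p_θ⁺ = (pₓ + p_θ)/2`, the integrals transform as:
`f₁` and `f₃` are preserved, while `f₂⁺ = e² f₂ + (1 − e²) a²/2`. -/
theorem disk_impact_map_on_integrals
    (e a x y θ px py pθ : ℝ) (hy : y = a) (hroll : pθ = px) :
    let pxPlus : ℝ := (px + pθ) / 2
    let pyPlus : ℝ := -e * py
    let pθPlus : ℝ := (px + pθ) / 2
    (pxPlus ^ 2 + x ^ 2) / 2 = (px ^ 2 + x ^ 2) / 2 ∧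
    pθPlus ^ 2 / 2 = pθ ^ 2 / 2 ∧
    (pyPlus ^ 2 + y ^ 2) / 2 =
      e ^ 2 * ((py ^ 2 + y ^ 2) / 2) + (1 - e ^ 2) * a ^ 2 / 2 := by
  subst hy hroll; refine ⟨by ring, by ring, by ring⟩
end
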